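/- arXiv:2501.14989 — 3 statements merged into one kernel-verified Lean document; each statement's English description precedes it below -/
import Mathlib

section
/- Let (V_i)_{i ∈ I} be a family of convex subsets, each containing 0, of a real vector space. Then for every ν, the gauge of the convex hull of the union equals the infimal convolution of the gauges: gauge_{conv(⋃_{i ∈ I} V_i)}(ν) = inf { Σ_{i ∈ I_n} gauge_{V_i}(ν_i) : I_n ⊆ I finite, ν = Σ_{i ∈ I_n} ν_i } (as values in [0, ∞]). -/
open scoped ENNReal Pointwise

/-- The extended-real-valued gauge (Minkowski functional) of a set `V`:
`gaugeE V x = inf {γ > 0 | x ∈ γ • V}`, with `inf ∅ = ∞`. -/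
noncomputable def gaugeE {E : Type*} [AddCommMonoid E] [Module ℝ E] (V : Set E) (x : E) : ℝ≥0∞ :=
  ⨅ (γ : ℝ) (_ : 0 < γ) (_ : x ∈ γ • V), ENNReal.ofReal γ

lemma gaugeE_le {E : Type*} [AddCommMonoid E] [Module ℝ E] (V : Set E) {x : E} {γ : ℝ}
    (hγ : 0 < γ) (hx : x ∈ γ • V) : gaugeE V x ≤ ENNReal.ofReal γ :=
  iInf_le_of_le γ <| iInf_le_of_le hγ <| iInf_le _ hx

lemma gaugeE_zero {E : Type*} [AddCommMonoid E] [Module ℝ E] {V : Set E} (h : (0 : E) ∈ V) :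
    gaugeE V 0 = 0 := by
  refine le_antisymm (ENNReal.le_of_forall_pos_le_add fun ε hε _ => ?_) zero_le
  calc gaugeE V 0 ≤ ENNReal.ofReal (ε : ℝ) :=
        gaugeE_le V (by exact_mod_cast hε) ⟨0, h, smul_zero _⟩
    _ ≤ 0 + ε := by simp [ENNReal.ofReal_coe_nnreal]

/-- For a (nonempty) family of convex sets each containing `0`, the gauge of the convex hull of
the union equals the infimal convolution of the gauges over finite decompositions. -/
theorem gaugeE_convexHull_iUnion_eq_infConv {E : Type*} [AddCommGroup E] [Module ℝ E]
    {ι : Type*} [Nonempty ι] (V : ι → Set E) (hV : ∀ i, Convex ℝ (V i))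
    (h0 : ∀ i, (0 : E) ∈ V i) :
    ∀ ν : E, gaugeE (convexHull ℝ (⋃ i, V i)) ν
      = ⨅ (In : Finset ι) (ν' : ι → E) (_ : ν = ∑ i ∈ In, ν' i),
          ∑ i ∈ In, gaugeE (V i) (ν' i) := by
  classical
  intro ν
  have h0c : (0 : E) ∈ convexHull ℝ (⋃ i, V i) :=
    subset_convexHull ℝ _ (Set.mem_iUnion.2 ⟨Classical.arbitrary ι, h0 _⟩)
  refine le_antisymm ?_ ?_
  · -- LHS ≤ RHS
    refine le_iInf fun In => le_iInf fun ν' => le_iInf fun hν => ?_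
    rcases In.eq_empty_or_nonempty with rfl | hne
    · simp only [Finset.sum_empty] at hν ⊢
      subst hν
      simp [gaugeE_zero h0c]
    set S := ∑ i ∈ In, gaugeE (V i) (ν' i) with hS
    refine ENNReal.le_of_forall_pos_le_add fun ε hε hStop => ?_
    have hfin : ∀ i ∈ In, gaugeE (V i) (ν' i) ≠ ∞ := fun i hi =>
      (lt_of_le_of_lt (Finset.single_le_sum (fun j _ => zero_le) hi) hStop).ne
    set δ : ℝ≥0∞ := (ε : ℝ≥0∞) / In.card with hδ
    have hδpos : 0 < δ := ENNReal.div_pos (by exact_mod_cast hε.ne') (by simp)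
    have hex : ∀ i, ∃ (γ : ℝ) (x : E), 0 < γ ∧ (i ∈ In → x ∈ V i ∧ γ • x = ν' i ∧
        ENNReal.ofReal γ ≤ gaugeE (V i) (ν' i) + δ) := by
      intro i
      by_cases hi : i ∈ In
      · have hlt : gaugeE (V i) (ν' i) < gaugeE (V i) (ν' i) + δ :=
          ENNReal.lt_add_right (hfin i hi) hδpos.ne'
        conv_lhs at hlt => rw [gaugeE]
        simp only [iInf_lt_iff] at hlt
        obtain ⟨γ, hγ, hmem, hlt⟩ := hlt
        obtain ⟨x, hxV, hx⟩ := hmem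
        exact ⟨γ, x, hγ, fun _ => ⟨hxV, hx, hlt.le⟩⟩
      · exact ⟨1, 0, one_pos, fun h => absurd h hi⟩
    choose g x hgpos hg using hex
    have hΓpos : 0 < ∑ i ∈ In, g i :=
      Finset.sum_pos (fun i _ => hgpos i) hne
    have hmem : ν ∈ (∑ i ∈ In, g i) • convexHull ℝ (⋃ i, V i) := by
      refine ⟨In.centerMass g x, ?_, ?_⟩
      · exact Finset.centerMass_mem_convexHull In (fun i _ => (hgpos i).le) hΓpos
          (fun i hi => Set.mem_iUnion.2 ⟨i, (hg i hi).1⟩)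
      · show (∑ i ∈ In, g i) • _ = ν
        rw [Finset.centerMass, smul_smul, mul_inv_cancel₀ hΓpos.ne', one_smul, hν]
        exact Finset.sum_congr rfl fun i hi => (hg i hi).2.1
    calc gaugeE (convexHull ℝ (⋃ i, V i)) ν ≤ ENNReal.ofReal (∑ i ∈ In, g i) :=
          gaugeE_le _ hΓpos hmem
      _ = ∑ i ∈ In, ENNReal.ofReal (g i) :=
          ENNReal.ofReal_sum_of_nonneg fun i _ => (hgpos i).le
      _ ≤ ∑ i ∈ In, (gaugeE (V i) (ν' i) + δ) :=
          Finset.sum_le_sum fun i hi => (hg i hi).2.2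
      _ = S + In.card * δ := by rw [Finset.sum_add_distrib, Finset.sum_const, nsmul_eq_mul, hS]
      _ ≤ S + ε := add_le_add le_rfl (by rw [hδ]; exact ENNReal.mul_div_le)
  · -- RHS ≤ LHS
    refine le_iInf fun γ => le_iInf fun hγ => le_iInf fun hmem => ?_
    obtain ⟨xx, hxx, hx⟩ := hmem
    rw [convexHull_eq] at hxx
    obtain ⟨ι', t, w, z, hw0, hw1, hz, hcm⟩ := hxx
    have hf : ∀ j, ∃ i, j ∈ t → z j ∈ V i := by
      intro j
      by_cases hj : j ∈ t
      · obtain ⟨i, hi⟩ := Set.mem_iUnion.1 (hz j hj)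
        exact ⟨i, fun _ => hi⟩
      · exact ⟨Classical.arbitrary ι, fun h => absurd h hj⟩
    choose f hf using hf
    set In : Finset ι := t.image f with hIn
    set ν' : ι → E := fun i => ∑ j ∈ t.filter (fun j => f j = i), (γ * w j) • z j with hν'
    have hsum : ν = ∑ i ∈ In, ν' i := by
      rw [hIn, hν']
      rw [Finset.sum_fiberwise_of_maps_to (fun j hj => Finset.mem_image_of_mem f hj)]
      rw [← hx, ← hcm, Finset.centerMass_eq_of_sum_1 _ _ hw1]
      show γ • ∑ i ∈ t, w i • z i = ∑ j ∈ t, (γ * w j) • z j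
      rw [Finset.smul_sum]
      exact Finset.sum_congr rfl fun j _ => by rw [smul_smul]
    set c : ι → ℝ := fun i => ∑ j ∈ t.filter (fun j => f j = i), w j with hc
    have hc0 : ∀ i, 0 ≤ c i := fun i =>
      Finset.sum_nonneg fun j hj => hw0 j (Finset.mem_filter.1 hj).1
    have key : ∀ i ∈ In, gaugeE (V i) (ν' i) ≤ ENNReal.ofReal (γ * c i) := by
      intro i _
      rcases eq_or_lt_of_le (hc0 i) with h | h
      · have : ∀ j ∈ t.filter (fun j => f j = i), w j = 0 := by
          intro j hj
          have := Finset.sum_eq_zero_iff_of_nonneg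
            (fun j hj => hw0 j (Finset.mem_filter.1 hj).1) |>.1 h.symm
          exact this j hj
        have hz0 : ν' i = 0 := Finset.sum_eq_zero fun j hj => by
          rw [this j hj, mul_zero, zero_smul]
        rw [hz0, gaugeE_zero (h0 i)]
        exact zero_le
      · refine gaugeE_le _ (mul_pos hγ h) ?_
        refine ⟨∑ j ∈ t.filter (fun j => f j = i), (w j / c i) • z j, ?_, ?_⟩
        · refine (hV i).sum_mem (fun j hj => div_nonneg (hw0 j (Finset.mem_filter.1 hj).1) (hc0 i))
            ?_ (fun j hj => ?_)
          · rw [← Finset.sum_div, div_self h.ne']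
          · exact (Finset.mem_filter.1 hj).2 ▸ hf j (Finset.mem_filter.1 hj).1
        · show (γ * c i) • _ = ν' i
          rw [Finset.smul_sum, hν']
          refine Finset.sum_congr rfl fun j hj => ?_
          rw [smul_smul]
          congr 1
          field_simp
    calc (⨅ (In : Finset ι) (ν' : ι → E) (_ : ν = ∑ i ∈ In, ν' i), ∑ i ∈ In, gaugeE (V i) (ν' i))
        ≤ ∑ i ∈ In, gaugeE (V i) (ν' i) :=
          iInf_le_of_le In <| iInf_le_of_le ν' <| iInf_le _ hsum
      _ ≤ ∑ i ∈ In, ENNReal.ofReal (γ * c i) := Finset.sum_le_sum key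
      _ = ENNReal.ofReal (∑ i ∈ In, γ * c i) :=
          (ENNReal.ofReal_sum_of_nonneg fun i _ => mul_nonneg hγ.le (hc0 i)).symm
      _ = ENNReal.ofReal γ := by
          rw [← Finset.mul_sum, hc, hIn,
            Finset.sum_fiberwise_of_maps_to (fun j hj => Finset.mem_image_of_mem f hj), hw1,
            mul_one]
end

section
/- Let (V_i)_{i ∈ I} be a family of convex subsets, each containing 0, of a real vector space, and let ⊕_{i ∈ I} V_i denote the set of all finite sums Σ_{i ∈ I_n} ν_i with I_n ⊆ I finite and ν_i ∈ V_i. Then for every ν, gauge_{⊕_{i ∈ I} V_i}(ν) = inf { max_{i ∈ I_n} gauge_{V_i}(ν_i) : I_n ⊆ I finite, ν = Σ_{i ∈ I_n} ν_i } (as values in [0, ∞]). -/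
open scoped ENNReal Pointwise

lemma gaugeE_le_of_mem {E : Type*} [AddCommMonoid E] [Module ℝ E] {V : Set E} {x : E}
    {γ : ℝ} (hγ : 0 < γ) (hx : x ∈ γ • V) : gaugeE V x ≤ ENNReal.ofReal γ :=
  iInf_le_of_le γ (iInf_le_of_le hγ (iInf_le _ hx))

/-- For a family of convex sets each containing `0`, the gauge of the set of all finite sums
`Σ_{i ∈ Iₙ} νᵢ` with `νᵢ ∈ Vᵢ` equals the infimum, over finite decompositions of `ν`, of the
maximum of the individual gauges. -/
theorem gaugeE_directSum_eq_infMax {E : Type*} [AddCommGroup E] [Module ℝ E]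
    {ι : Type*} (V : ι → Set E) (hV : ∀ i, Convex ℝ (V i)) (h0 : ∀ i, (0 : E) ∈ V i) :
    ∀ ν : E, gaugeE {x : E | ∃ (In : Finset ι) (f : ι → E),
        (∀ i ∈ In, f i ∈ V i) ∧ x = ∑ i ∈ In, f i} ν
      = ⨅ (In : Finset ι) (ν' : ι → E) (_ : ν = ∑ i ∈ In, ν' i),
          ⨆ i ∈ In, gaugeE (V i) (ν' i) := by
  intro ν
  set S : Set E := {x : E | ∃ (In : Finset ι) (f : ι → E),
      (∀ i ∈ In, f i ∈ V i) ∧ x = ∑ i ∈ In, f i} with hS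
  apply le_antisymm
  · refine le_iInf fun In => le_iInf fun ν' => le_iInf fun hν => ?_
    set M := ⨆ i ∈ In, gaugeE (V i) (ν' i) with hM
    have key : ∀ γ : ℝ, 0 < γ → M < ENNReal.ofReal γ → gaugeE S ν ≤ ENNReal.ofReal γ := by
      intro γ hγ hMγ
      have hmem : ∀ i ∈ In, γ⁻¹ • ν' i ∈ V i := by
        intro i hi
        have h1 : gaugeE (V i) (ν' i) < ENNReal.ofReal γ :=
          lt_of_le_of_lt (le_iSup₂ (f := fun i (_ : i ∈ In) => gaugeE (V i) (ν' i)) i hi) hMγ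
        rw [gaugeE] at h1
        simp only [iInf_lt_iff] at h1
        obtain ⟨c, hc, hmem', hcγ⟩ := h1
        have hcγ' : c < γ := (ENNReal.ofReal_lt_ofReal_iff hγ).mp hcγ
        obtain ⟨v, hv, hvc⟩ := hmem'
        rw [← hvc]
        show γ⁻¹ • c • v ∈ V i
        have he : γ⁻¹ • c • v = (c / γ) • v + (1 - c / γ) • (0 : E) := by
          simp [smul_smul, div_eq_inv_mul]
        rw [he]
        exact hV i hv (h0 i) (by positivity) (by
          have : c / γ ≤ 1 := (div_le_one hγ).mpr hcγ'.le
          linarith) (by ring)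
      refine gaugeE_le_of_mem hγ ?_
      rw [Set.mem_smul_set_iff_inv_smul_mem₀ (ne_of_gt hγ)]
      exact ⟨In, fun i => γ⁻¹ • ν' i, hmem, by simp [hν, Finset.smul_sum]⟩
    rcases eq_or_ne M ∞ with h | h
    · simp [h]
    refine ENNReal.le_of_forall_pos_le_add fun ε hε _ => ?_
    have hε' : (0 : ℝ) < ε := hε
    have hγpos : 0 < M.toReal + ε := by positivity
    have hlt : M < ENNReal.ofReal (M.toReal + ε) := by
      rw [ENNReal.ofReal_add ENNReal.toReal_nonneg hε'.le, ENNReal.ofReal_toReal h]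
      exact ENNReal.lt_add_right h (by simpa using hε.ne')
    calc gaugeE S ν ≤ ENNReal.ofReal (M.toReal + ε) := key _ hγpos hlt
      _ = M + ε := by
        rw [ENNReal.ofReal_add ENNReal.toReal_nonneg hε'.le, ENNReal.ofReal_toReal h]
        simp
  · rw [gaugeE]
    refine le_iInf fun γ => le_iInf fun hγ => le_iInf fun hmem => ?_
    obtain ⟨x, hx, rfl⟩ := hmem
    obtain ⟨In, f, hf, rfl⟩ := hx
    refine iInf_le_of_le In (iInf_le_of_le (fun i => γ • f i)
      (iInf_le_of_le (by simp [Finset.smul_sum]) ?_))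
    exact iSup₂_le fun i hi => gaugeE_le_of_mem hγ ⟨f i, hf i hi, rfl⟩
end

section
/- Let H be a real Hilbert space, V ⊆ H a closed convex set containing 0, and L ⊆ H a closed subspace such that V + L = V (V is translation-invariant under L). Let V^⊥ := {w ∈ H : ⟨w, ν⟩ = 0 for all ν ∈ V} and let E := (L ⊕ V^⊥)^⊥ be the orthogonal complement of the closed subspace spanned by L and V^⊥. Then L, V^⊥, and E are mutually orthogonal closed subspaces with H = L ⊕ V^⊥ ⊕ E, and for every ν ∈ V with orthogonal decomposition ν = ν₁ + ν₂ + ν₃ (ν₁ ∈ L, ν₂ ∈ V^⊥, ν₃ ∈ E), one has ν₂ = 0 and ν₃ ∈ V ∩ E. -/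
open scoped Pointwise RealInnerProductSpace

/-- Gauge set decomposition: let `V` be a closed convex set containing `0` in a real Hilbert
space `H`, `L` a closed subspace with `V + L = V`, `Vp = V^⊥` the orthogonal set of `V`, and
`E₀ = (L ⊔ Vp)^⊥`.  Then `L`, `Vp`, `E₀` are mutually orthogonal closed subspaces with
`H = L ⊕ Vp ⊕ E₀`, and every `ν ∈ V` with decomposition `ν = ν₁ + ν₂ + ν₃`
(`ν₁ ∈ L`, `ν₂ ∈ Vp`, `ν₃ ∈ E₀`) has `ν₂ = 0` and `ν₃ ∈ V ∩ E₀`. -/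
theorem gauge_set_decomposition {H : Type*} [NormedAddCommGroup H] [InnerProductSpace ℝ H]
    [CompleteSpace H] (V : Set H) (hV : Convex ℝ V) (hVcl : IsClosed V) (h0 : (0 : H) ∈ V)
    (L : Submodule ℝ H) (hLcl : IsClosed (L : Set H)) (hVL : V + (L : Set H) = V)
    (Vp : Submodule ℝ H) (hVp : ∀ w : H, w ∈ Vp ↔ ∀ ν ∈ V, ⟪w, ν⟫ = 0)
    (E₀ : Submodule ℝ H)
    (hE₀ : ∀ w : H, w ∈ E₀ ↔ ∀ ν ∈ (L : Set H) + (Vp : Set H), ⟪w, ν⟫ = 0) :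
    (∀ x ∈ L, ∀ y ∈ Vp, ⟪x, y⟫ = 0) ∧
    (∀ x ∈ L, ∀ z ∈ E₀, ⟪x, z⟫ = 0) ∧
    (∀ y ∈ Vp, ∀ z ∈ E₀, ⟪y, z⟫ = 0) ∧
    IsClosed (Vp : Set H) ∧ IsClosed (E₀ : Set H) ∧
    (∀ v : H, ∃! t : H × H × H,
        t.1 ∈ L ∧ t.2.1 ∈ Vp ∧ t.2.2 ∈ E₀ ∧ v = t.1 + t.2.1 + t.2.2) ∧
    (∀ ν ∈ V, ∀ ν₁ ∈ L, ∀ ν₂ ∈ Vp, ∀ ν₃ ∈ E₀,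
        ν = ν₁ + ν₂ + ν₃ → ν₂ = 0 ∧ ν₃ ∈ V ∩ (E₀ : Set H)) := by
  -- L ⊆ V
  have hLV : (L : Set H) ⊆ V := by
    intro l hl
    have : (0 : H) + l ∈ V + (L : Set H) := Set.add_mem_add h0 hl
    rw [hVL] at this
    simpa using this
  -- orthogonality L ⊥ Vp
  have hLVp : ∀ x ∈ L, ∀ y ∈ Vp, ⟪x, y⟫ = 0 := by
    intro x hx y hy
    have := (hVp y).1 hy x (hLV hx)
    rwa [real_inner_comm] at this
  -- membership in the set sum
  have hmemL : ∀ x ∈ L, x ∈ (L : Set H) + (Vp : Set H) := by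
    intro x hx
    have : x + (0 : H) ∈ (L : Set H) + (Vp : Set H) := Set.add_mem_add hx Vp.zero_mem
    simpa using this
  have hmemVp : ∀ y ∈ Vp, y ∈ (L : Set H) + (Vp : Set H) := by
    intro y hy
    have : (0 : H) + y ∈ (L : Set H) + (Vp : Set H) := Set.add_mem_add L.zero_mem hy
    simpa using this
  have hLE : ∀ x ∈ L, ∀ z ∈ E₀, ⟪x, z⟫ = 0 := by
    intro x hx z hz
    have := (hE₀ z).1 hz x (hmemL x hx)
    rwa [real_inner_comm] at this
  have hVpE : ∀ y ∈ Vp, ∀ z ∈ E₀, ⟪y, z⟫ = 0 := by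
    intro y hy z hz
    have := (hE₀ z).1 hz y (hmemVp y hy)
    rwa [real_inner_comm] at this
  -- closedness
  have hVpcl : IsClosed (Vp : Set H) := by
    have hset : (Vp : Set H) = ⋂ ν ∈ V, {w : H | ⟪w, ν⟫ = 0} := by
      ext w
      simp only [SetLike.mem_coe, hVp, Set.mem_iInter, Set.mem_setOf_eq]
    rw [hset]
    exact isClosed_biInter fun ν _ =>
      isClosed_eq (Continuous.inner continuous_id continuous_const) continuous_const
  have hE₀cl : IsClosed (E₀ : Set H) := by
    have hset : (E₀ : Set H) = ⋂ ν ∈ (L : Set H) + (Vp : Set H), {w : H | ⟪w, ν⟫ = 0} := by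
      ext w
      simp only [SetLike.mem_coe, hE₀, Set.mem_iInter, Set.mem_setOf_eq]
    rw [hset]
    exact isClosed_biInter fun ν _ =>
      isClosed_eq (Continuous.inner continuous_id continuous_const) continuous_const
  haveI : CompleteSpace L := hLcl.completeSpace_coe
  haveI : CompleteSpace Vp := hVpcl.completeSpace_coe
  -- a triple summing to zero is zero
  have hzero : ∀ a ∈ L, ∀ b ∈ Vp, ∀ c ∈ E₀, a + b + c = 0 → a = 0 ∧ b = 0 ∧ c = 0 := by
    intro a ha b hb c hc habc
    have ha0 : a = 0 := by
      have : ⟪a, a + b + c⟫ = ⟪a, a⟫ := by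
        rw [inner_add_right, inner_add_right, hLVp a ha b hb, hLE a ha c hc]; ring
      rw [habc, inner_zero_right] at this
      exact inner_self_eq_zero.mp this.symm
    have hb0 : b = 0 := by
      have : ⟪b, a + b + c⟫ = ⟪b, b⟫ := by
        have h1 : ⟪b, a⟫ = 0 := by rw [real_inner_comm]; exact hLVp a ha b hb
        rw [inner_add_right, inner_add_right, h1, hVpE b hb c hc]; ring
      rw [habc, inner_zero_right] at this
      exact inner_self_eq_zero.mp this.symm
    have hc0 : c = 0 := by
      rw [ha0, hb0] at habc; simpa using habc
    exact ⟨ha0, hb0, hc0⟩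
  refine ⟨hLVp, hLE, hVpE, hVpcl, hE₀cl, ?_, ?_⟩
  · -- existence and uniqueness of decomposition
    intro v
    obtain ⟨v₁, hv₁, r, hr, hvr⟩ := L.exists_add_mem_mem_orthogonal v
    obtain ⟨v₂, hv₂, v₃, hv₃, hrd⟩ := Vp.exists_add_mem_mem_orthogonal r
    have hv₃L : ∀ x ∈ L, ⟪x, v₃⟫ = 0 := by
      intro x hx
      have hxr : ⟪x, r⟫ = 0 := hr x hx
      have hxv₂ : ⟪x, v₂⟫ = 0 := hLVp x hx v₂ hv₂
      have : v₃ = r - v₂ := by rw [hrd]; abel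
      rw [this, inner_sub_right, hxr, hxv₂]; ring
    have hv₃E : v₃ ∈ E₀ := by
      rw [hE₀]
      rintro ν ⟨a, ha, b, hb, rfl⟩
      have h1 : ⟪v₃, a⟫ = 0 := by rw [real_inner_comm]; exact hv₃L a ha
      have h2 : ⟪v₃, b⟫ = 0 := by rw [real_inner_comm]; exact hv₃ b hb
      rw [inner_add_right, h1, h2]; ring
    refine ⟨(v₁, v₂, v₃), ⟨hv₁, hv₂, hv₃E, by rw [hvr, hrd]; abel⟩, ?_⟩
    rintro ⟨a, b, c⟩ ⟨ha, hb, hc, heq⟩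
    have hsum : (a - v₁) + (b - v₂) + (c - v₃) = 0 := by
      have h : a + b + c = v₁ + v₂ + v₃ := by rw [← heq, hvr, hrd]; abel
      rw [show (a - v₁) + (b - v₂) + (c - v₃) = (a + b + c) - (v₁ + v₂ + v₃) by abel, h,
        sub_self]
    obtain ⟨e1, e2, e3⟩ := hzero _ (L.sub_mem ha hv₁) _ (Vp.sub_mem hb hv₂)
      _ (E₀.sub_mem hc hv₃E) hsum
    exact Prod.ext (sub_eq_zero.mp e1) (Prod.ext (sub_eq_zero.mp e2) (sub_eq_zero.mp e3))
  · -- last part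
    intro ν hν ν₁ hν₁ ν₂ hν₂ ν₃ hν₃ hdec
    have h1 : ⟪ν₂, ν₁⟫ = 0 := by rw [real_inner_comm]; exact hLVp ν₁ hν₁ ν₂ hν₂
    have h2 : ⟪ν₂, ν₃⟫ = 0 := hVpE ν₂ hν₂ ν₃ hν₃
    have hz : ⟪ν₂, ν⟫ = ⟪ν₂, ν₂⟫ := by
      rw [hdec, inner_add_right, inner_add_right, h1, h2]; ring
    have hν₂0 : ν₂ = 0 := by
      have := (hVp ν₂).1 hν₂ ν hν
      rw [hz] at this
      exact inner_self_eq_zero.mp this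
    refine ⟨hν₂0, ?_, hν₃⟩
    have : ν + (-ν₁) ∈ V + (L : Set H) := Set.add_mem_add hν (L.neg_mem hν₁)
    rw [hVL] at this
    have hid : ν + (-ν₁) = ν₃ := by rw [hdec, hν₂0]; abel
    rwa [hid] at this
end
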